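/- arXiv:1702.03801 — 2 statements merged into one kernel-verified Lean document; each statement's English description precedes it below -/
import Mathlib

section
/- Let (X, {R_0,...,R_d}) be a symmetric association scheme with Γ = (X, R_1) connected, and let H be the unweighted distribution diagram of R_1. Suppose H' = H \ {0,1} is disconnected. Let Ĩ = {i : 1 ≤ i ≤ d, p_{11}^i = p_{11}^0} and let Ũ be the vertex set of a connected component of H' having more than one vertex which minimizes Σ_{i∈Ũ} v_i among all such components. Then {2,...,d} = Ĩ ∪ Ũ; that is, the set W̃ = {2,...,d} \ (Ĩ ∪ Ũ) is empty. -/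
/-!
Write `Γ(x)` for the `R_i`-neighbourhood of `x` and `k = p_{ii}^0`. If `x` sees `a` and `b` in
classes lying in different components of `H_i \ {0,i}`, every common neighbour of `a` and `b` is
a neighbour of `x`, since otherwise the class of `x` and that neighbour would join both
components. Hence for `(x,y) ∈ R_w`, `(x,u) ∈ R_{w'}` with `w`, `w'` in different components,
`Γ(x) ∩ Γ(u) ∩ Γ(y)` contains `Γ(x) ∩ Γ(y)` or `Γ(x) ∩ Γ(u)`. Double counting the pairs `(y, c)`
with `(x,y) ∈ R_w` and `c ∈ Γ(x) ∩ Γ(u) ∩ Γ(y)`, and comparing with `v_w p_{ii}^w = k p_{wi}^i`,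
shows that if `0 < p_{ii}^w ≤ p_{ii}^{w'}` then `p_{ii}^{w'} = k`. A class `t` with `p_{ii}^t = k`
makes `R_t`-related vertices twins, so `t` is isolated in `H_i`; and every component contains a
class `w` with `p_{ii}^w > 0` because `Γ` is connected. So all classes outside `Ĩ` lie in the
component `Ũ`.
-/

/-- A symmetric association scheme with `d` classes on a finite vertex set `X`:
a partition of `X × X` into nonempty symmetric relations `R 0, …, R d`, where
`R 0` is the identity relation, together with intersection numbers `p i j k`. -/
structure SymAssocScheme (X : Type*) [Fintype X] (d : ℕ) where
  R : Fin (d + 1) → X → X → Prop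
  R_nonempty : ∀ i, ∃ a b, R i a b
  R_symm : ∀ i a b, R i a b → R i b a
  R_zero : ∀ a b, R 0 a b ↔ a = b
  R_unique : ∀ a b, ∃! i, R i a b
  p : Fin (d + 1) → Fin (d + 1) → Fin (d + 1) → ℕ
  p_spec : ∀ (i j k : Fin (d + 1)) (a b : X), R k a b →
    {c : X | R i a c ∧ R j c b}.ncard = p i j k

namespace SymAssocScheme

variable {X : Type*} [Fintype X] {d : ℕ}

/-- The (simple) graph `Γ = (X, R_i)` of the basis relation `R_i`. -/
def graph (A : SymAssocScheme X d) (i : Fin (d + 1)) : SimpleGraph X where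
  Adj a b := a ≠ b ∧ A.R i a b
  symm := ⟨fun a b h => ⟨h.1.symm, A.R_symm i a b h.2⟩⟩
  loopless := ⟨fun a h => h.1 rfl⟩

/-- The unweighted distribution diagram `H_i` (with loops discarded):
`j ~ k` iff `p i j k + p i k j > 0`. -/
def diagram (A : SymAssocScheme X d) (i : Fin (d + 1)) : SimpleGraph (Fin (d + 1)) where
  Adj j k := j ≠ k ∧ 0 < A.p i j k + A.p i k j
  symm := ⟨fun j k h => ⟨h.1.symm, by omega⟩⟩
  loopless := ⟨fun j h => h.1 rfl⟩

end SymAssocScheme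

namespace SymAssocScheme

variable {X : Type*} [Fintype X] {d : ℕ} (A : SymAssocScheme X d)

lemma eq_of_R_of_R {i j : Fin (d + 1)} {a b : X} (hi : A.R i a b) (hj : A.R j a b) : i = j :=
  (A.R_unique a b).unique hi hj

lemma R_comm {i : Fin (d + 1)} {a b : X} : A.R i a b ↔ A.R i b a :=
  ⟨A.R_symm i a b, A.R_symm i b a⟩

lemma R_zero_self (a : X) : A.R 0 a a := (A.R_zero a a).mpr rfl

lemma eq_zero_of_R_self {j : Fin (d + 1)} {a : X} (h : A.R j a a) : j = 0 :=
  A.eq_of_R_of_R h (A.R_zero_self a)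

open Classical in
noncomputable def nbhd (i : Fin (d + 1)) (x : X) : Finset X := Finset.univ.filter (A.R i x)

@[simp]
lemma mem_nbhd {i : Fin (d + 1)} {x c : X} : c ∈ A.nbhd i x ↔ A.R i x c := by
  simp [nbhd]

lemma card_nbhd_inter_nbhd [DecidableEq X] {i j k : Fin (d + 1)} {a b : X} (h : A.R k a b) :
    (A.nbhd i a ∩ A.nbhd j b).card = A.p i j k := by
  rw [← A.p_spec i j k a b h, ← Set.ncard_coe_finset]
  congr 1
  ext c
  simpa using and_congr_right fun _ => A.R_comm

lemma card_nbhd (i : Fin (d + 1)) (x : X) : (A.nbhd i x).card = A.p i i 0 := by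
  classical
  simpa using A.card_nbhd_inter_nbhd (i := i) (j := i) (A.R_zero_self x)

lemma p_pos_of_R {i j k : Fin (d + 1)} {a b c : X} (hab : A.R k a b) (hac : A.R i a c)
    (hcb : A.R j c b) : 0 < A.p i j k := by
  classical
  rw [← A.card_nbhd_inter_nbhd hab, Finset.card_pos]
  exact ⟨c, by simpa using ⟨hac, A.R_symm j c b hcb⟩⟩

lemma exists_R_R_of_p_pos {i j k : Fin (d + 1)} {a b : X} (hab : A.R k a b)
    (hp : 0 < A.p i j k) : ∃ c, A.R i a c ∧ A.R j c b := by
  classical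
  rw [← A.card_nbhd_inter_nbhd hab, Finset.card_pos] at hp
  obtain ⟨c, hc⟩ := hp
  simp only [Finset.mem_inter, mem_nbhd] at hc
  exact ⟨c, hc.1, A.R_symm j b c hc.2⟩

lemma valency_pos (j : Fin (d + 1)) : 0 < A.p j j 0 := by
  obtain ⟨a, b, hab⟩ := A.R_nonempty j
  exact A.p_pos_of_R (A.R_zero_self a) hab (A.R_symm j a b hab)

lemma p_le_valency (i k : Fin (d + 1)) : A.p i i k ≤ A.p i i 0 := by
  classical
  obtain ⟨a, b, hab⟩ := A.R_nonempty k
  rw [← A.card_nbhd_inter_nbhd hab, ← A.card_nbhd i a]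
  exact Finset.card_le_card Finset.inter_subset_left

lemma nbhd_subset_of_p_eq_valency {i t : Fin (d + 1)} (ht : A.p i i t = A.p i i 0) {a b : X}
    (hab : A.R t a b) : A.nbhd i a ⊆ A.nbhd i b := by
  classical
  have h : A.nbhd i a ∩ A.nbhd i b = A.nbhd i a :=
    Finset.eq_of_subset_of_card_le Finset.inter_subset_left
      (by rw [A.card_nbhd_inter_nbhd hab, A.card_nbhd, ht])
  exact Finset.inter_eq_left.mp h

lemma diagram_adj_of_R {i j k : Fin (d + 1)} (hjk : j ≠ k) {a b c : X} (hab : A.R j a b)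
    (hbc : A.R i b c) (hac : A.R k a c) : (A.diagram i).Adj j k :=
  ⟨hjk, Nat.add_pos_right _ (A.p_pos_of_R (A.R_symm j a b hab) hbc (A.R_symm k a c hac))⟩

lemma exists_R_of_diagram_adj {i j k : Fin (d + 1)} (h : (A.diagram i).Adj j k) :
    ∃ a b c, A.R j a b ∧ A.R i b c ∧ A.R k a c := by
  rcases Nat.add_pos_iff_pos_or_pos.mp h.2 with hp | hp
  · obtain ⟨a, b, hab⟩ := A.R_nonempty k
    obtain ⟨c, hac, hcb⟩ := A.exists_R_R_of_p_pos hab hp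
    exact ⟨b, c, a, A.R_symm j c b hcb, A.R_symm i a c hac, A.R_symm k a b hab⟩
  · obtain ⟨a, b, hab⟩ := A.R_nonempty j
    obtain ⟨c, hac, hcb⟩ := A.exists_R_R_of_p_pos hab hp
    exact ⟨b, a, c, A.R_symm j a b hab, hac, A.R_symm k c b hcb⟩

lemma eq_of_diagram_adj_of_p_eq_valency {i t s : Fin (d + 1)} (ht : A.p i i t = A.p i i 0)
    (h : (A.diagram i).Adj t s) : s = i := by
  obtain ⟨a, b, c, hab, hbc, hac⟩ := A.exists_R_of_diagram_adj h
  have hac' : A.R i a c := by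
    simpa using A.nbhd_subset_of_p_eq_valency ht (A.R_symm t a b hab) (by simpa using hbc)
  exact A.eq_of_R_of_R hac hac'

abbrev reducedVertices (i : Fin (d + 1)) : Set (Fin (d + 1)) := {j | j ≠ 0 ∧ j ≠ i}

abbrev reducedDiagram (i : Fin (d + 1)) : SimpleGraph (reducedVertices i) :=
  (A.diagram i).induce (reducedVertices i)

lemma R_trichotomy (i : Fin (d + 1)) (a b : X) :
    a = b ∨ A.R i a b ∨ ∃ v : reducedVertices i, A.R v a b := by
  obtain ⟨m, hm, -⟩ := A.R_unique a b
  by_cases hm0 : m = 0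
  · exact Or.inl ((A.R_zero a b).mp (hm0 ▸ hm))
  by_cases hmi : m = i
  · exact Or.inr (Or.inl (hmi ▸ hm))
  · exact Or.inr (Or.inr ⟨⟨m, hm0, hmi⟩, hm⟩)

lemma reducedDiagram_reachable_of_R {i : Fin (d + 1)} {v w : reducedVertices i} {a b c : X}
    (hab : A.R v a b) (hbc : A.R i b c) (hac : A.R w a c) :
    (A.reducedDiagram i).Reachable v w := by
  by_cases hvw : v = w
  · exact hvw ▸ SimpleGraph.Reachable.refl v
  · exact SimpleGraph.Adj.reachable
      (A.diagram_adj_of_R (Subtype.coe_ne_coe.mpr hvw) hab hbc hac)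

lemma eq_of_mem_supp_of_p_eq_valency {i : Fin (d + 1)}
    {C : (A.reducedDiagram i).ConnectedComponent} {t v : reducedVertices i}
    (ht : A.p i i t = A.p i i 0) (htC : t ∈ C.supp) (hvC : v ∈ C.supp) : v = t := by
  obtain ⟨walk⟩ := SimpleGraph.ConnectedComponent.exact (htC.trans hvC.symm)
  cases walk with
  | nil => rfl
  | @cons _ u _ hadj _ => exact absurd (A.eq_of_diagram_adj_of_p_eq_valency ht hadj) u.2.2

lemma exists_mem_supp_p_pos {i : Fin (d + 1)} (hconn : (A.graph i).Connected)
    (C : (A.reducedDiagram i).ConnectedComponent) : ∃ w ∈ C.supp, 0 < A.p i i w := by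
  induction C using SimpleGraph.ConnectedComponent.ind with | h v => ?_
  by_contra! hzero
  obtain ⟨x, y, hxy⟩ := A.R_nonempty v
  -- Along a walk of `Γ` from `x`, the class of `(x, e)` never enters the component of `v`.
  have key : ∀ e, Relation.ReflTransGen (A.graph i).Adj x e →
      ∀ u : reducedVertices i, A.R u x e → ¬ (A.reducedDiagram i).Reachable u v := by
    intro e hxe
    induction hxe with
    | refl => exact fun u hu => absurd (A.eq_zero_of_R_self hu) u.2.1
    | @tail e f _ hef ih =>
      intro u hxf huv
      rcases A.R_trichotomy i x e with rfl | hxe | ⟨m, hm⟩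
      · exact u.2.2 (A.eq_of_R_of_R hxf hef.2)
      · exact (hzero u (SimpleGraph.ConnectedComponent.sound huv)).not_gt
          (A.p_pos_of_R hxf hxe hef.2)
      · exact ih m hm ((A.reducedDiagram_reachable_of_R hm hef.2 hxf).trans huv)
  exact key y ((SimpleGraph.reachable_iff_reflTransGen x y).mp (hconn x y)) v hxy
    (SimpleGraph.Reachable.refl v)

lemma nbhd_inter_subset_of_not_reachable [DecidableEq X] {i : Fin (d + 1)}
    {j j' : reducedVertices i} (hjj' : ¬ (A.reducedDiagram i).Reachable j j') {a b c : X}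
    (hca : A.R j c a) (hcb : A.R j' c b) : A.nbhd i a ∩ A.nbhd i b ⊆ A.nbhd i c := by
  intro e he
  simp only [Finset.mem_inter, mem_nbhd] at he ⊢
  rcases A.R_trichotomy i c e with rfl | hce | ⟨m, hm⟩
  · exact absurd (A.eq_of_R_of_R hca (A.R_symm i a c he.1)) j.2.2
  · exact hce
  · exact absurd ((A.reducedDiagram_reachable_of_R hca he.1 hm).trans
      (A.reducedDiagram_reachable_of_R hcb he.2 hm).symm) hjj'

lemma nbhd_inter_subset_or [DecidableEq X] {i : Fin (d + 1)} {w w' : reducedVertices i}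
    (hww' : ¬ (A.reducedDiagram i).Reachable w w') {x y u : X} (hxy : A.R w x y)
    (hxu : A.R w' x u) :
    A.nbhd i x ∩ A.nbhd i y ⊆ A.nbhd i u ∨ A.nbhd i x ∩ A.nbhd i u ⊆ A.nbhd i y := by
  rcases A.R_trichotomy i y u with rfl | hyu | ⟨m, hm⟩
  · exact absurd (Subtype.ext (A.eq_of_R_of_R hxy hxu) ▸ SimpleGraph.Reachable.refl w) hww'
  · exact absurd (A.reducedDiagram_reachable_of_R hxu (A.R_symm i y u hyu) hxy).symm hww'
  by_cases hmw' : (A.reducedDiagram i).Reachable m w'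
  · exact Or.inr (A.nbhd_inter_subset_of_not_reachable (fun hwm => hww' (hwm.trans hmw'))
      (A.R_symm w x y hxy) hm)
  · exact Or.inl (A.nbhd_inter_subset_of_not_reachable (fun hw'm => hmw' hw'm.symm)
      (A.R_symm w' x u hxu) (A.R_symm m y u hm))

lemma p_le_card_nbhd_inter [DecidableEq X] {i : Fin (d + 1)} {w w' : reducedVertices i}
    (hww' : ¬ (A.reducedDiagram i).Reachable w w') (hle : A.p i i w ≤ A.p i i w') {x y u : X}
    (hxy : A.R w x y) (hxu : A.R w' x u) :
    A.p i i w ≤ (A.nbhd i x ∩ A.nbhd i u ∩ A.nbhd i y).card := by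
  rcases A.nbhd_inter_subset_or hww' hxy hxu with h | h
  · rw [← A.card_nbhd_inter_nbhd hxy]
    refine Finset.card_le_card fun c hc => ?_
    simp only [Finset.mem_inter] at hc ⊢
    exact ⟨⟨hc.1, h (Finset.mem_inter.mpr hc)⟩, hc.2⟩
  · rw [← A.card_nbhd_inter_nbhd hxu] at hle
    exact hle.trans (Finset.card_le_card (Finset.subset_inter subset_rfl h))

lemma sum_card_inter_nbhd [DecidableEq X] {i : Fin (d + 1)} {x : X} {T : Finset X}
    (hT : T ⊆ A.nbhd i x) (j : Fin (d + 1)) :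
    ∑ y ∈ A.nbhd j x, (T ∩ A.nbhd i y).card = T.card * A.p j i i := by
  classical
  have hcount := Finset.sum_card_bipartiteAbove_eq_sum_card_bipartiteBelow
    (s := A.nbhd j x) (t := T) (r := fun y c => A.R i y c)
  have habove : ∀ y, T.bipartiteAbove (fun y c => A.R i y c) y = T ∩ A.nbhd i y := by
    intro y; ext c; simp [Finset.bipartiteAbove]
  have hbelow : ∀ c ∈ T,
      ((A.nbhd j x).bipartiteBelow (fun y c => A.R i y c) c).card = A.p j i i := by
    intro c hc
    rw [← A.card_nbhd_inter_nbhd (mem_nbhd A |>.mp (hT hc))]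
    congr 1; ext y; simp [Finset.bipartiteBelow, A.R_comm]
  simp only [habove] at hcount
  rw [hcount, Finset.sum_congr rfl hbelow, Finset.sum_const, smul_eq_mul]

lemma sum_nbhd_const (j : Fin (d + 1)) (x : X) (n : ℕ) :
    ∑ _y ∈ A.nbhd j x, n = A.p j j 0 * n := by
  rw [Finset.sum_const, smul_eq_mul, A.card_nbhd]

lemma valency_mul_p_eq (i j : Fin (d + 1)) : A.p j j 0 * A.p i i j = A.p i i 0 * A.p j i i := by
  classical
  obtain ⟨x, -, -⟩ := A.R_nonempty 0
  rw [← A.card_nbhd i x, ← A.sum_card_inter_nbhd subset_rfl j, ← A.sum_nbhd_const]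
  exact Finset.sum_congr rfl fun y hy => (A.card_nbhd_inter_nbhd ((A.mem_nbhd).mp hy)).symm

lemma p_eq_valency_of_not_reachable {i : Fin (d + 1)} {w w' : reducedVertices i}
    (hww' : ¬ (A.reducedDiagram i).Reachable w w') (hpos : 0 < A.p i i w)
    (hle : A.p i i w ≤ A.p i i w') : A.p i i w' = A.p i i 0 := by
  classical
  obtain ⟨x, u, hxu⟩ := A.R_nonempty w'
  have hcount : A.p w w 0 * A.p i i w ≤ A.p i i w' * A.p w i i :=
    calc A.p w w 0 * A.p i i w = ∑ _y ∈ A.nbhd w x, A.p i i w := (A.sum_nbhd_const _ _ _).symm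
      _ ≤ ∑ y ∈ A.nbhd w x, (A.nbhd i x ∩ A.nbhd i u ∩ A.nbhd i y).card :=
        Finset.sum_le_sum fun y hy => A.p_le_card_nbhd_inter hww' hle (A.mem_nbhd.mp hy) hxu
      _ = A.p i i w' * A.p w i i := by
        rw [A.sum_card_inter_nbhd Finset.inter_subset_left, A.card_nbhd_inter_nbhd hxu]
  rw [A.valency_mul_p_eq] at hcount
  have hpos' : 0 < A.p w i i :=
    Nat.pos_of_mul_pos_left ((A.valency_mul_p_eq i w) ▸ Nat.mul_pos (A.valency_pos w) hpos)
  exact le_antisymm (A.p_le_valency i w') (Nat.le_of_mul_le_mul_right hcount hpos')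

end SymAssocScheme

open SymAssocScheme in
theorem W_empty_general {X : Type*} [Fintype X] {d : ℕ}
    (A : SymAssocScheme X d) (hconn : (A.graph 1).Connected)
    (Itil : Set (Fin (d + 1)))
    (hI : Itil = {j : Fin (d + 1) | j ≠ 0 ∧ A.p 1 1 j = A.p 1 1 0})
    (Util : Finset (Fin (d + 1)))
    (hU : ∃ c : ((A.diagram 1).induce
          {j : Fin (d + 1) | j ≠ 0 ∧ j ≠ 1}).ConnectedComponent,
        (Util : Set (Fin (d + 1))) = Subtype.val '' c.supp ∧ c.supp.Nontrivial) :
    {j : Fin (d + 1) | j ≠ 0 ∧ j ≠ 1 ∧ j ∉ Itil ∧ j ∉ Util} = ∅ := by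
  subst hI
  obtain ⟨C, hUC, hC⟩ := hU
  refine Set.eq_empty_of_forall_notMem fun j ⟨hj0, hj1, hjI, hjU⟩ => ?_
  let v : reducedVertices 1 := ⟨j, hj0, hj1⟩
  have hvC : (A.reducedDiagram 1).connectedComponentMk v ≠ C := fun h =>
    hjU (Finset.mem_coe.mp (hUC ▸ ⟨v, h, rfl⟩))
  obtain ⟨w, hw, hwpos⟩ :=
    A.exists_mem_supp_p_pos hconn ((A.reducedDiagram 1).connectedComponentMk v)
  obtain ⟨w', hw', hw'pos⟩ := A.exists_mem_supp_p_pos hconn C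
  have hww' : ¬ (A.reducedDiagram 1).Reachable w w' := fun h =>
    hvC (hw.symm.trans ((SimpleGraph.ConnectedComponent.sound h).trans hw'))
  rcases le_total (A.p 1 1 w) (A.p 1 1 w') with hle | hle
  · have hw'k := A.p_eq_valency_of_not_reachable hww' hwpos hle
    exact hC.not_subset_singleton fun u hu => A.eq_of_mem_supp_of_p_eq_valency hw'k hw' hu
  · have hwk := A.p_eq_valency_of_not_reachable (fun h => hww' h.symm) hw'pos hle
    have hvw : v = w := A.eq_of_mem_supp_of_p_eq_valency hwk hw rfl
    exact hjI ⟨hj0, show A.p 1 1 v = A.p 1 1 0 from hvw ▸ hwk⟩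

open SymAssocScheme in
/-- Theorem 3.11: with `Γ = (X, R_1)` connected, `H' = H \ {0,1}` disconnected,
`Ĩ = {i ≠ 0 : p_{11}^i = p_{11}^0}`, and `Ũ` the vertex set of a non-singleton
component of `H'` minimizing `∑_{i ∈ Ũ} v_i`, we have `{2,…,d} = Ĩ ∪ Ũ`;
that is, `W̃ = {2,…,d} \ (Ĩ ∪ Ũ)` is empty. -/
theorem W_empty {X : Type*} [Fintype X] {d : ℕ} (hd : 0 < d)
    (A : SymAssocScheme X d) (hconn : (A.graph 1).Connected)
    (hH' : ¬ ((A.diagram 1).induce {j : Fin (d + 1) | j ≠ 0 ∧ j ≠ 1}).Connected)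
    (Itil : Set (Fin (d + 1)))
    (hI : Itil = {j : Fin (d + 1) | j ≠ 0 ∧ A.p 1 1 j = A.p 1 1 0})
    (Util : Finset (Fin (d + 1)))
    (hU : ∃ c : ((A.diagram 1).induce
          {j : Fin (d + 1) | j ≠ 0 ∧ j ≠ 1}).ConnectedComponent,
        (Util : Set (Fin (d + 1))) = Subtype.val '' c.supp ∧ c.supp.Nontrivial)
    (hUmin : ∀ U' : Finset (Fin (d + 1)),
        (∃ c : ((A.diagram 1).induce
            {j : Fin (d + 1) | j ≠ 0 ∧ j ≠ 1}).ConnectedComponent,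
          (U' : Set (Fin (d + 1))) = Subtype.val '' c.supp ∧ c.supp.Nontrivial) →
        ∑ j ∈ Util, A.p j j 0 ≤ ∑ j ∈ U', A.p j j 0) :
    {j : Fin (d + 1) | j ≠ 0 ∧ j ≠ 1 ∧ j ∉ Itil ∧ j ∉ Util} = ∅ :=
  W_empty_general A hconn Itil hI Util hU
end

section
/- Let (X, {R_0,...,R_d}) be a symmetric association scheme with Γ = (X, R_1) connected and H the unweighted distribution diagram of R_1. For 0 ≤ h, let I_h = {i : d_H(0,i) = h}, and for i ∈ I_h define c(i) = Σ_{j ∈ I_{h-1}} p_{1j}^i. Then: (a) for any geodesic 0 = ℓ_0, 1 = ℓ_1, ℓ_2, ..., ℓ_h in H, one has 1 = c(ℓ_1) ≤ c(ℓ_2) ≤ ... ≤ c(ℓ_h); (b) if c(i) = 1, then c(ℓ) = 1 for every ℓ ∈ {1,...,d} lying on a geodesic from 0 to i in H; (c) if c(i) = 1, then there is a unique shortest path from 0 to i in H, and for every (a,b) ∈ R_i there is a unique shortest path from a to b in Γ. -/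
/-! The Γ-distance of a pair `(a, b) ∈ R_i` depends only on `i` and equals `d_H(0, i)`: a
Γ-walk projects onto an `H`-walk through the classes of `(·, b)`, and an `H`-walk lifts back to
a Γ-walk because `p_{1j}^i > 0` for `H`-neighbours `j, i`. Hence `c(i)` is the number of
neighbours of `a` one step closer to `b`. If `j ~ k` in `H` with `k` one layer further out,
pick `(y, x) ∈ R_k` and `z ~ x` with `(y, z) ∈ R_j`; every neighbour of `y` closer to `z` is
then closer to `x`, so `c(j) ≤ c(k)`. When `c(i) = 1`, every vertex of a geodesic towards the
target has exactly one neighbour closer to it, and this forces the geodesic, in Γ and in `H`. -/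

open Finset

namespace SimpleGraph

variable {V : Type*} {G : SimpleGraph V} {a b w x y z : V}

open Classical in
noncomputable def closerNeighbors [Fintype V] (G : SimpleGraph V) (a b : V) : Finset V :=
  {w | G.Adj a w ∧ G.dist w b + 1 = G.dist a b}

theorem mem_closerNeighbors [Fintype V] :
    w ∈ G.closerNeighbors a b ↔ G.Adj a w ∧ G.dist w b + 1 = G.dist a b := by
  simp [closerNeighbors]

theorem Adj.dist_le_dist_add_one (h : G.Adj a w) (b : V) : G.dist a b ≤ G.dist w b + 1 := by
  have := h.reachable.dist_triangle_left b
  rwa [dist_eq_one_iff_adj.mpr h, add_comm] at this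

theorem Walk.mem_closerNeighbors_of_length_cons_eq_dist [Fintype V] {h : G.Adj a w}
    {q : G.Walk w b} (hq : (Walk.cons h q).length = G.dist a b) :
    w ∈ G.closerNeighbors a b ∧ q.length = G.dist w b := by
  have := h.dist_le_dist_add_one b
  have := dist_le q
  rw [Walk.length_cons] at hq
  exact ⟨mem_closerNeighbors.mpr ⟨h, by omega⟩, by omega⟩

theorem Reachable.closerNeighbors_nonempty [Fintype V] (hr : G.Reachable a b) (hne : a ≠ b) :
    (G.closerNeighbors a b).Nonempty := by
  obtain ⟨q, hq⟩ := hr.exists_walk_length_eq_dist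
  cases q with
  | nil => exact absurd rfl hne
  | cons h q => exact ⟨_, (Walk.mem_closerNeighbors_of_length_cons_eq_dist hq).1⟩

theorem closerNeighbors_of_adj [Fintype V] (h : G.Adj a b) : G.closerNeighbors a b = {b} := by
  ext w
  rw [mem_closerNeighbors, mem_singleton, dist_eq_one_iff_adj.mpr h]
  constructor
  · rintro ⟨haw, hw⟩
    exact (haw.symm.reachable.trans h.reachable).dist_eq_zero_iff.mp (by omega)
  · rintro rfl
    simp [h]

theorem closerNeighbors_subset_of_adj [Fintype V] (hzx : G.Adj z x)
    (hyx : G.dist y x = G.dist y z + 1) : G.closerNeighbors y z ⊆ G.closerNeighbors y x := by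
  intro w hw
  obtain ⟨hyw, hwz⟩ := mem_closerNeighbors.mp hw
  have := hzx.reachable.dist_triangle_right w
  have := hyw.dist_le_dist_add_one x
  rw [dist_eq_one_iff_adj.mpr hzx] at *
  exact mem_closerNeighbors.mpr ⟨hyw, by omega⟩

theorem dist_le_sub_of_forall_adj {ℓ : ℕ → V} {h : ℕ}
    (hadj : ∀ s < h, G.Adj (ℓ s) (ℓ (s + 1))) {t u : ℕ} (htu : t ≤ u) (huh : u ≤ h) :
    G.dist (ℓ t) (ℓ u) ≤ u - t := by
  induction u, htu using Nat.le_induction with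
  | base => simp
  | succ u htu ih =>
    have := (hadj u (by omega)).reachable.dist_triangle_right (ℓ t)
    rw [dist_eq_one_iff_adj.mpr (hadj u (by omega))] at this
    have := ih (by omega)
    omega

theorem Connected.dist_eq_of_forall_adj (hG : G.Connected) {ℓ : ℕ → V} {h : ℕ}
    (hadj : ∀ s < h, G.Adj (ℓ s) (ℓ (s + 1))) (hh : G.dist (ℓ 0) (ℓ h) = h) {t : ℕ}
    (ht : t ≤ h) : G.dist (ℓ 0) (ℓ t) = t := by
  have := dist_le_sub_of_forall_adj hadj (Nat.zero_le t) ht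
  have := dist_le_sub_of_forall_adj hadj ht le_rfl
  have : G.dist (ℓ 0) (ℓ h) ≤ G.dist (ℓ 0) (ℓ t) + G.dist (ℓ t) (ℓ h) :=
    hG.dist_triangle
  omega

theorem Connected.le_of_dist_add_dist_eq {α : Type*} [Preorder α] (hG : G.Connected)
    {o : V} {f : V → α} (hf : ∀ j k, G.Adj j k → G.dist o j + 1 = G.dist o k → f j ≤ f k)
    {l i : V} (hli : G.dist o l + G.dist l i = G.dist o i) : f l ≤ f i := by
  obtain ⟨q, hq⟩ := hG.exists_walk_length_eq_dist l i
  rw [← hq] at hli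
  clear hq
  induction q with
  | nil => exact le_rfl
  | @cons u m v h q ih =>
    rw [Walk.length_cons] at hli
    have := h.reachable.dist_triangle_right o
    have : G.dist o v ≤ G.dist o m + G.dist m v := hG.dist_triangle
    have := dist_le q
    rw [dist_eq_one_iff_adj.mpr h] at *
    exact (hf u m h (by omega)).trans (ih (by omega))

theorem Walk.eq_of_length_eq_dist [Fintype V] (P : V → Prop)
    (hP : ∀ v w, P v → w ∈ G.closerNeighbors v b → P w)
    (hcard : ∀ v, P v → #(G.closerNeighbors v b) ≤ 1) (ha : P a) (q q' : G.Walk a b)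
    (hq : q.length = G.dist a b) (hq' : q'.length = G.dist a b) : q = q' := by
  induction q with
  | nil => exact (Walk.length_eq_zero_iff.mp (hq'.trans dist_self)).eq_nil.symm
  | @cons a w b h r ih =>
    cases q' with
    | nil => simp at hq
    | cons h' r' =>
      obtain ⟨hw, hr⟩ := mem_closerNeighbors_of_length_cons_eq_dist hq
      obtain ⟨hw', hr'⟩ := mem_closerNeighbors_of_length_cons_eq_dist hq'
      obtain rfl := card_le_one.mp (hcard a ha) _ hw _ hw'
      rw [ih hP hcard (hP a w ha hw) r' hr hr']

theorem Reachable.existsUnique_geodesic (hr : G.Reachable a b)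
    (h : ∀ q q' : G.Walk a b, q.length = G.dist a b → q'.length = G.dist a b → q = q') :
    ∃! q : G.Walk a b, q.IsPath ∧ q.length = G.dist a b := by
  obtain ⟨q, hq⟩ := hr.exists_walk_length_eq_dist
  exact ⟨q, ⟨q.isPath_of_length_eq_dist hq, hq⟩, fun q' hq' => h q' q hq'.2 hq⟩

end SimpleGraph

namespace SymAssocScheme

open SimpleGraph Classical

variable {X : Type*} [Fintype X] {d : ℕ} (A : SymAssocScheme X d) {i j k l : Fin (d + 1)}
  {a b : X}

theorem eq_of_R (h : A.R i a b) (h' : A.R j a b) : i = j :=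
  (A.R_unique a b).unique h h'

theorem ne_of_R (hi : i ≠ 0) (h : A.R i a b) : a ≠ b := by
  rintro rfl
  exact hi (A.eq_of_R h ((A.R_zero a a).mpr rfl))

theorem card_eq_p (h : A.R k a b) : #{c | A.R i a c ∧ A.R j c b} = A.p i j k := by
  rw [← A.p_spec i j k a b h, Set.ncard_eq_toFinset_card', Set.toFinset_ofPred]

theorem p_pos_iff (h : A.R k a b) : 0 < A.p i j k ↔ ∃ c, A.R i a c ∧ A.R j c b := by
  rw [← A.p_spec i j k a b h, Set.ncard_pos]
  rfl

theorem p_pos_comm (h : 0 < A.p l i j) : 0 < A.p l j i := by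
  obtain ⟨a, b, hab⟩ := A.R_nonempty j
  obtain ⟨c, hac, hcb⟩ := (A.p_pos_iff hab).mp h
  exact (A.p_pos_iff hcb).mpr ⟨a, A.R_symm _ _ _ hac, hab⟩

theorem diagram_adj_iff : (A.diagram l).Adj j k ↔ j ≠ k ∧ 0 < A.p l j k := by
  refine ⟨fun h => ⟨h.1, ?_⟩, fun h => ⟨h.1, by omega⟩⟩
  rcases Nat.eq_zero_or_pos (A.p l j k) with h0 | hpos
  · exact A.p_pos_comm (by have := h.2; omega)
  · exact hpos

theorem graph_one_adj_iff (hd : 0 < d) : (A.graph 1).Adj a b ↔ A.R 1 a b := by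
  have : NeZero d := ⟨hd.ne'⟩
  exact ⟨And.right, fun h => ⟨A.ne_of_R Fin.zero_ne_one'.symm h, h⟩⟩

theorem exists_diagram_walk_length_le (w : (A.graph 1).Walk a b) (hab : A.R i a b) :
    ∃ q : (A.diagram 1).Walk i 0, q.length ≤ w.length := by
  induction w generalizing i with
  | nil =>
    obtain rfl : i = 0 := A.eq_of_R hab ((A.R_zero _ _).mpr rfl)
    exact ⟨Walk.nil, le_rfl⟩
  | @cons a c b hac w ih =>
    obtain ⟨j, hcb, -⟩ := A.R_unique c b
    obtain ⟨q, hq⟩ := ih hcb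
    rw [Walk.length_cons]
    by_cases hji : j = i
    · subst hji
      exact ⟨q, by omega⟩
    · have hp : 0 < A.p 1 j i := (A.p_pos_iff hab).mpr ⟨c, hac.2, hcb⟩
      exact ⟨Walk.cons ((A.diagram_adj_iff.mpr ⟨hji, hp⟩).symm) q, by simp [hq]⟩

theorem graph_dist_le_length (hd : 0 < d) (q : (A.diagram 1).Walk i 0) (hab : A.R i a b) :
    (A.graph 1).dist a b ≤ q.length := by
  generalize h0 : (0 : Fin (d + 1)) = o at q
  induction q generalizing a with
  | nil =>
    subst h0
    rw [(A.R_zero a b).mp hab, dist_self]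
    exact le_rfl
  | @cons i j o hij q ih =>
    obtain ⟨c, hac, hcb⟩ := (A.p_pos_iff hab).mp (A.diagram_adj_iff.mp hij.symm).2
    have := ((A.graph_one_adj_iff hd).mpr hac).dist_le_dist_add_one b
    have := ih hcb h0
    rw [Walk.length_cons]
    omega

theorem diagram_connected (hconn : (A.graph 1).Connected) : (A.diagram 1).Connected := by
  refine ((A.diagram 1).connected_iff_exists_forall_reachable).mpr ⟨0, fun i => ?_⟩
  obtain ⟨a, b, hab⟩ := A.R_nonempty i
  obtain ⟨q, -⟩ := A.exists_diagram_walk_length_le (hconn.preconnected a b).some hab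
  exact ⟨q.reverse⟩

theorem graph_dist_eq (hd : 0 < d) (hconn : (A.graph 1).Connected) (hab : A.R i a b) :
    (A.graph 1).dist a b = (A.diagram 1).dist 0 i := by
  obtain ⟨w, hw⟩ := hconn.exists_walk_length_eq_dist a b
  obtain ⟨q, hq⟩ := A.exists_diagram_walk_length_le w hab
  obtain ⟨q', hq'⟩ := (A.diagram_connected hconn).exists_walk_length_eq_dist i 0
  have := dist_le q
  have := A.graph_dist_le_length hd q' hab
  rw [dist_comm (G := A.diagram 1)]
  omega

noncomputable def cNumber (i : Fin (d + 1)) : ℕ :=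
  ∑ j ∈ univ.filter (fun j => (A.diagram 1).dist 0 j + 1 = (A.diagram 1).dist 0 i), A.p 1 j i

theorem cNumber_eq_card_closerNeighbors (hd : 0 < d) (hconn : (A.graph 1).Connected)
    (hab : A.R i a b) : A.cNumber i = #((A.graph 1).closerNeighbors a b) := by
  have hsplit : (A.graph 1).closerNeighbors a b =
      (univ.filter fun j => (A.diagram 1).dist 0 j + 1 = (A.diagram 1).dist 0 i).biUnion
        fun j => {w | A.R 1 a w ∧ A.R j w b} := by
    ext w
    simp only [mem_closerNeighbors, mem_biUnion, mem_filter, mem_univ, true_and,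
      A.graph_one_adj_iff hd, A.graph_dist_eq hd hconn hab]
    constructor
    · rintro ⟨haw, hwb⟩
      obtain ⟨j, hj, -⟩ := A.R_unique w b
      exact ⟨j, by rwa [A.graph_dist_eq hd hconn hj] at hwb, haw, hj⟩
    · rintro ⟨j, hj, haw, hwb⟩
      exact ⟨haw, by rwa [A.graph_dist_eq hd hconn hwb]⟩
  rw [hsplit, card_biUnion]
  · exact sum_congr rfl fun j _ => (A.card_eq_p hab).symm
  · intro j _ k _ hjk
    simp only [Function.onFun, Finset.disjoint_left, mem_filter, mem_univ, true_and]
    exact fun w hj hk => hjk (A.eq_of_R hj.2 hk.2)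

theorem cNumber_one (hd : 0 < d) (hconn : (A.graph 1).Connected) : A.cNumber 1 = 1 := by
  obtain ⟨a, b, hab⟩ := A.R_nonempty 1
  rw [A.cNumber_eq_card_closerNeighbors hd hconn hab,
    closerNeighbors_of_adj ((A.graph_one_adj_iff hd).mpr hab), card_singleton]

theorem cNumber_pos (hd : 0 < d) (hconn : (A.graph 1).Connected) (hi : i ≠ 0) :
    0 < A.cNumber i := by
  obtain ⟨a, b, hab⟩ := A.R_nonempty i
  rw [A.cNumber_eq_card_closerNeighbors hd hconn hab, card_pos]
  exact (hconn.preconnected a b).closerNeighbors_nonempty (A.ne_of_R hi hab)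

theorem cNumber_le_of_adj (hd : 0 < d) (hconn : (A.graph 1).Connected)
    (hjk : (A.diagram 1).Adj j k)
    (hdist : (A.diagram 1).dist 0 j + 1 = (A.diagram 1).dist 0 k) :
    A.cNumber j ≤ A.cNumber k := by
  obtain ⟨x, y, hxy⟩ := A.R_nonempty k
  obtain ⟨z, hxz, hzy⟩ := (A.p_pos_iff hxy).mp (A.diagram_adj_iff.mp hjk).2
  have hyz := A.R_symm _ _ _ hzy
  have hyx := A.R_symm _ _ _ hxy
  rw [A.cNumber_eq_card_closerNeighbors hd hconn hyz,
    A.cNumber_eq_card_closerNeighbors hd hconn hyx]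
  refine card_le_card (closerNeighbors_subset_of_adj ((A.graph_one_adj_iff hd).mpr hxz).symm ?_)
  rw [A.graph_dist_eq hd hconn hyz, A.graph_dist_eq hd hconn hyx, hdist]

theorem card_closerNeighbors_le_of_mem (hd : 0 < d) (hconn : (A.graph 1).Connected) {v w : X}
    (hw : w ∈ (A.graph 1).closerNeighbors v b) :
    #((A.graph 1).closerNeighbors w b) ≤ #((A.graph 1).closerNeighbors v b) := by
  obtain ⟨hvw, hwb⟩ := mem_closerNeighbors.mp hw
  obtain ⟨j, hj, -⟩ := A.R_unique w b
  obtain ⟨k, hk, -⟩ := A.R_unique v b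
  rw [← A.cNumber_eq_card_closerNeighbors hd hconn hj,
    ← A.cNumber_eq_card_closerNeighbors hd hconn hk]
  rw [A.graph_dist_eq hd hconn hj, A.graph_dist_eq hd hconn hk] at hwb
  have hp : 0 < A.p 1 j k := (A.p_pos_iff hk).mpr ⟨w, hvw.2, hj⟩
  have hjk : j ≠ k := by
    rintro rfl
    omega
  exact A.cNumber_le_of_adj hd hconn (A.diagram_adj_iff.mpr ⟨hjk, hp⟩) hwb

theorem card_diagram_closerNeighbors_le_cNumber :
    #((A.diagram 1).closerNeighbors i 0) ≤ A.cNumber i := by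
  calc #((A.diagram 1).closerNeighbors i 0)
      = ∑ j ∈ (A.diagram 1).closerNeighbors i 0, 1 := card_eq_sum_ones _
    _ ≤ ∑ j ∈ (A.diagram 1).closerNeighbors i 0, A.p 1 j i :=
      sum_le_sum fun j hj => (A.diagram_adj_iff.mp (mem_closerNeighbors.mp hj).1.symm).2
    _ ≤ A.cNumber i := by
      refine sum_le_sum_of_subset fun j hj => ?_
      rw [mem_closerNeighbors, dist_comm, dist_comm (u := i)] at hj
      exact mem_filter.mpr ⟨mem_univ j, hj.2⟩

theorem existsUnique_graph_geodesic (hd : 0 < d) (hconn : (A.graph 1).Connected)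
    (hi : A.cNumber i = 1) (hab : A.R i a b) :
    ∃! q : (A.graph 1).Walk a b, q.IsPath ∧ q.length = (A.graph 1).dist a b := by
  refine (hconn.preconnected a b).existsUnique_geodesic
    (Walk.eq_of_length_eq_dist (fun v => #((A.graph 1).closerNeighbors v b) ≤ 1) ?_ (fun _ => id)
      (by rw [← A.cNumber_eq_card_closerNeighbors hd hconn hab, hi]))
  exact fun v w hv hw => (A.card_closerNeighbors_le_of_mem hd hconn hw).trans hv

theorem existsUnique_diagram_geodesic (hd : 0 < d) (hconn : (A.graph 1).Connected)
    (hi : A.cNumber i = 1) :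
    ∃! q : (A.diagram 1).Walk 0 i, q.IsPath ∧ q.length = (A.diagram 1).dist 0 i := by
  have hunique := Walk.eq_of_length_eq_dist (G := A.diagram 1) (b := 0) (fun j => A.cNumber j ≤ 1)
    (fun v w hv hw => by
      obtain ⟨hvw, hwv⟩ := mem_closerNeighbors.mp hw
      rw [dist_comm, dist_comm (u := v)] at hwv
      exact (A.cNumber_le_of_adj hd hconn hvw.symm hwv).trans hv)
    (fun v hv => A.card_diagram_closerNeighbors_le_cNumber.trans hv) hi.le
  refine ((A.diagram_connected hconn).preconnected 0 i).existsUnique_geodesic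
    fun q q' hq hq' => Walk.reverse_injective (hunique _ _ ?_ ?_) <;>
  rwa [Walk.length_reverse, dist_comm]

end SymAssocScheme

open SymAssocScheme in
/-- Proposition 5.4: with `Γ = (X, R_1)` connected, `H` the distribution diagram of
`R_1`, and `c i = ∑_{j : d_H(0,j)+1 = d_H(0,i)} p_{1j}^i`:
(a) along any geodesic `0 = ℓ_0, 1 = ℓ_1, …, ℓ_h` in `H` we have
`1 = c(ℓ_1) ≤ c(ℓ_2) ≤ ⋯ ≤ c(ℓ_h)`;
(b) if `c i = 1` then `c l = 1` for every `l ≠ 0` lying on a geodesic from `0` to `i`;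
(c) if `c i = 1` then the shortest path from `0` to `i` in `H` is unique, and for any
`(a,b) ∈ R_i` the shortest path from `a` to `b` in `Γ` is unique. -/
theorem c_monotone_and_unique_geodesics {X : Type*} [Fintype X] {d : ℕ} (hd : 0 < d)
    (A : SymAssocScheme X d) (hconn : (A.graph 1).Connected)
    (c : Fin (d + 1) → ℕ)
    (hc : ∀ i : Fin (d + 1), c i = ∑ j ∈ Finset.univ.filter
        (fun j : Fin (d + 1) =>
          (A.diagram 1).dist 0 j + 1 = (A.diagram 1).dist 0 i), A.p 1 j i) :
    (∀ (h : ℕ) (ℓ : ℕ → Fin (d + 1)), 1 ≤ h → ℓ 0 = 0 → ℓ 1 = 1 →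
      (∀ s < h, (A.diagram 1).Adj (ℓ s) (ℓ (s + 1))) →
      (A.diagram 1).dist 0 (ℓ h) = h →
      c (ℓ 1) = 1 ∧ ∀ s, 1 ≤ s → s < h → c (ℓ s) ≤ c (ℓ (s + 1))) ∧
    (∀ i l : Fin (d + 1), c i = 1 → l ≠ 0 →
      (A.diagram 1).dist 0 l + (A.diagram 1).dist l i = (A.diagram 1).dist 0 i →
      c l = 1) ∧
    (∀ i : Fin (d + 1), c i = 1 →
      (∃! q : (A.diagram 1).Walk 0 i,
        q.IsPath ∧ q.length = (A.diagram 1).dist 0 i) ∧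
      ∀ a b : X, A.R i a b →
        ∃! q : (A.graph 1).Walk a b,
          q.IsPath ∧ q.length = (A.graph 1).dist a b) := by
  obtain rfl : c = A.cNumber := funext hc
  have hH := A.diagram_connected hconn
  refine ⟨fun h ℓ _ hℓ0 hℓ1 hadj hdist => ⟨hℓ1 ▸ A.cNumber_one hd hconn, fun s _ hs => ?_⟩,
    fun i l hi hl hli => ?_, fun i hi => ⟨A.existsUnique_diagram_geodesic hd hconn hi,
      fun a b hab => A.existsUnique_graph_geodesic hd hconn hi hab⟩⟩
  · have hlayer : ∀ t ≤ h, (A.diagram 1).dist 0 (ℓ t) = t := fun t ht =>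
      hℓ0 ▸ hH.dist_eq_of_forall_adj hadj (hℓ0 ▸ hdist) ht
    refine A.cNumber_le_of_adj hd hconn (hadj s hs) ?_
    rw [hlayer s hs.le, hlayer (s + 1) hs]
  · have hmono := hH.le_of_dist_add_dist_eq (fun _ _ => A.cNumber_le_of_adj hd hconn) hli
    exact le_antisymm (hi ▸ hmono) (A.cNumber_pos hd hconn hl)
end
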